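/- arXiv:1902.00204 — 2 statements merged into one kernel-verified Lean document; each statement's English description precedes it below -/
import Mathlib

section
/- For every integer k ≥ 1, the prism P_2 □ C_{2k+1} (the Cartesian product of the path on 2 vertices with the cycle on 2k+1 vertices) is D-minimal for the Maker–Breaker total domination game: it is a D graph, and for every edge e the graph (P_2 □ C_{2k+1}) − e is not a D graph. -/
namespace MBTD

variable {V : Type*} [Fintype V] [DecidableEq V]

/-- `a` is a total dominating set of `G`: every vertex has a neighbour in `a`. -/
def IsTotalDomSet (G : SimpleGraph V) (a : Finset V) : Prop :=
  ∀ v : V, ∃ u ∈ a, G.Adj u v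

/-- `WinsAux win n turn a b` describes the generic positional game in which two players
alternately claim previously unclaimed vertices until every vertex is claimed.
Here `a` is the set of vertices claimed so far by the tracked player, `b` the set claimed by
the opponent, `turn = true` iff the tracked player is the next to move, and `n` is the number
of moves still to be played.  The tracked player wins iff `win` holds of the final position. -/
def WinsAux (win : Finset V → Finset V → Prop) : ℕ → Bool → Finset V → Finset V → Prop
  | 0, _, a, b => win a b
  | n + 1, true, a, b => ∃ v ∈ Finset.univ \ (a ∪ b), WinsAux win n false (insert v a) b
  | n + 1, false, a, b => ∀ v ∈ Finset.univ \ (a ∪ b), WinsAux win n true a (insert v b)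

/-- Dominator has a winning strategy in the Maker-Breaker total domination game on `G`,
where `dFirst = true` means Dominator moves first (the D-game) and `dFirst = false` means
Staller moves first (the S-game).  Dominator wins iff the set of vertices he has claimed at
the end of the game is a total dominating set of `G`. -/
def DominatorWinsMBTD (G : SimpleGraph V) (dFirst : Bool) : Prop :=
  WinsAux (fun a _ => IsTotalDomSet G a) (Fintype.card V) dFirst ∅ ∅

/-- Staller has a winning strategy in the Maker-Breaker total domination game on `G`,
where `dFirst = true` means Dominator moves first (the D-game) and `dFirst = false` means
Staller moves first (the S-game).  Staller wins iff she claims every vertex of the open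
neighbourhood of some vertex. -/
def StallerWinsMBTD (G : SimpleGraph V) (dFirst : Bool) : Prop :=
  WinsAux (fun a _ => ∃ v : V, ∀ u : V, G.Adj u v → u ∈ a) (Fintype.card V) (!dFirst) ∅ ∅

/-- `G` is a `𝒟` graph: Dominator wins both the D-game and the S-game. -/
def IsD (G : SimpleGraph V) : Prop :=
  DominatorWinsMBTD G true ∧ DominatorWinsMBTD G false

/-- `G` is an `𝒮` graph: Staller wins both the D-game and the S-game. -/
def IsS (G : SimpleGraph V) : Prop :=
  StallerWinsMBTD G true ∧ StallerWinsMBTD G false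

/-- `G` is an `𝒩` graph: whichever player moves first wins. -/
def IsN (G : SimpleGraph V) : Prop :=
  DominatorWinsMBTD G true ∧ StallerWinsMBTD G false

/-! ### Generic game lemmas -/

lemma winsAux_of_achieved (P : Finset V → Prop) (hP : ∀ a v, P a → P (insert v a)) :
    ∀ (m : ℕ) (t : Bool) (a b : Finset V), P a → (a ∪ b).card + m ≤ Fintype.card V →
      WinsAux (fun a _ => P a) m t a b := by
  intro m
  induction m with
  | zero => intro t a b h _; cases t <;> exact h
  | succ n ih =>
    intro t a b h hc
    cases t with
    | false =>
      intro v hv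
      rw [Finset.mem_sdiff] at hv
      refine ih true a (insert v b) h ?_
      rw [Finset.union_insert, Finset.card_insert_of_notMem hv.2]
      omega
    | true =>
      have hne : ¬ (Finset.univ : Finset V) ⊆ a ∪ b := by
        intro hsub
        have := Finset.card_le_card hsub
        rw [Finset.card_univ] at this
        omega
      obtain ⟨v, -, hv⟩ := Finset.not_subset.mp hne
      refine ⟨v, Finset.mem_sdiff.mpr ⟨Finset.mem_univ v, hv⟩, ?_⟩
      refine ih false (insert v a) b (hP a v h) ?_
      rw [Finset.insert_union, Finset.card_insert_of_notMem hv]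
      omega

lemma winsAux_clash (w1 w2 : Finset V → Finset V → Prop)
    (h : ∀ a b, Disjoint a b → w1 a b → w2 b a → False) :
    ∀ (n : ℕ) (t : Bool) (a b : Finset V), Disjoint a b →
      WinsAux w1 n t a b → WinsAux w2 n (!t) b a → False := by
  intro n
  induction n with
  | zero => intro t a b hd h1 h2; exact h a b hd h1 h2
  | succ n ih =>
    intro t a b hd h1 h2
    cases t with
    | true =>
      obtain ⟨v, hv, h1'⟩ := h1
      rw [Finset.mem_sdiff] at hv
      have h2' := h2 v (by rw [Finset.mem_sdiff, Finset.union_comm]; exact hv)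
      refine ih false (insert v a) b ?_ h1' h2'
      rw [Finset.disjoint_insert_left]
      exact ⟨fun hb => hv.2 (Finset.mem_union_right _ hb), hd⟩
    | false =>
      obtain ⟨v, hv, h2'⟩ := h2
      rw [Finset.mem_sdiff, Finset.union_comm] at hv
      have h1' := h1 v (by rw [Finset.mem_sdiff]; exact hv)
      refine ih true a (insert v b) ?_ h1' h2'
      rw [Finset.disjoint_insert_right]
      exact ⟨fun ha => hv.2 (Finset.mem_union_left _ ha), hd⟩

lemma staller_not_dominator (G : SimpleGraph V) (f : Bool) :
    StallerWinsMBTD G f → ¬ DominatorWinsMBTD G f := by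
  intro hS hD
  refine winsAux_clash (fun a _ => IsTotalDomSet G a)
    (fun a _ => ∃ v : V, ∀ u : V, G.Adj u v → u ∈ a) ?_ (Fintype.card V) f ∅ ∅
    (Finset.disjoint_empty_left _) hD hS
  intro a b hd h1 h2
  obtain ⟨v, hv⟩ := h2
  obtain ⟨u, hu, huv⟩ := h1 v
  exact Finset.disjoint_left.mp hd hu (hv u huv)

lemma pairing_strategy (G : SimpleGraph V) (p : V → V)
    (hinv : ∀ x, p (p x) = x) (hne : ∀ x, p x ≠ x)
    (hdom : ∀ v : V, ∃ u, G.Adj u v ∧ G.Adj (p u) v) :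
    ∀ (m : ℕ) (t : Bool) (a b : Finset V),
      (a ∪ b).card + m = Fintype.card V → (∀ x ∈ b, p x ∈ a) →
      WinsAux (fun a _ => IsTotalDomSet G a) m t a b := by
  intro m
  induction m using Nat.strong_induction_on with
  | _ m ih =>
  intro t a b hc hI
  match m, t with
  | 0, t =>
    have huniv : a ∪ b = Finset.univ := by
      apply Finset.eq_univ_of_card; omega
    have hTDS : IsTotalDomSet G a := by
      intro v
      obtain ⟨u, hu1, hu2⟩ := hdom v
      by_cases hu : u ∈ a
      · exact ⟨u, hu, hu1⟩
      · have : u ∈ a ∪ b := huniv ▸ Finset.mem_univ u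
        rw [Finset.mem_union] at this
        exact ⟨p u, hI u (this.resolve_left hu), hu2⟩
    cases t <;> exact hTDS
  | n + 1, true =>
    have hne' : ¬ (Finset.univ : Finset V) ⊆ a ∪ b := by
      intro hsub
      have := Finset.card_le_card hsub
      rw [Finset.card_univ] at this; omega
    obtain ⟨v, -, hv⟩ := Finset.not_subset.mp hne'
    refine ⟨v, Finset.mem_sdiff.mpr ⟨Finset.mem_univ v, hv⟩, ?_⟩
    refine ih n (by omega) false (insert v a) b ?_ ?_
    · rw [Finset.insert_union, Finset.card_insert_of_notMem hv]; omega
    · exact fun x hx => Finset.mem_insert_of_mem (hI x hx)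
  | n + 1, false =>
    intro v hv
    rw [Finset.mem_sdiff, Finset.mem_union] at hv
    have hcard' : (a ∪ insert v b).card + n = Fintype.card V := by
      rw [Finset.union_insert, Finset.card_insert_of_notMem (fun h => hv.2 (Finset.mem_union.mp h))]
      omega
    by_cases hp : p v ∈ a
    · refine ih n (by omega) true a (insert v b) hcard' ?_
      intro x hx
      rcases Finset.mem_insert.mp hx with rfl | hx
      · exact hp
      · exact hI x hx
    · have hpb : p v ∉ b := fun h => hv.2 (Or.inl (hinv v ▸ hI (p v) h))
      match n with
      | 0 =>
        exfalso
        have huniv : a ∪ insert v b = Finset.univ := by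
          apply Finset.eq_univ_of_card; omega
        have : p v ∈ a ∪ insert v b := huniv ▸ Finset.mem_univ (p v)
        rw [Finset.mem_union, Finset.mem_insert] at this
        rcases this with h | h | h
        · exact hp h
        · exact hne v h
        · exact hpb h
      | n' + 1 =>
        refine ⟨p v, ?_, ?_⟩
        · rw [Finset.mem_sdiff, Finset.mem_union, Finset.mem_insert]
          exact ⟨Finset.mem_univ _, fun h => by
            rcases h with h | h | h
            · exact hp h
            · exact hne v h
            · exact hpb h⟩
        · refine ih n' (by omega) false (insert (p v) a) (insert v b) ?_ ?_
          · rw [Finset.insert_union, Finset.card_insert_of_notMem]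
            · omega
            · rw [Finset.mem_union, Finset.mem_insert]
              push_neg
              exact ⟨hp, (hne v), hpb⟩
          · intro x hx
            rcases Finset.mem_insert.mp hx with rfl | hx
            · exact Finset.mem_insert_self _ _
            · exact Finset.mem_insert_of_mem (hI x hx)

/-! ### Staller machinery -/

def SW (H : SimpleGraph V) (a : Finset V) : Prop := ∃ v : V, ∀ u : V, H.Adj u v → u ∈ a

omit [Fintype V] in
lemma sw_mono (H : SimpleGraph V) : ∀ (a : Finset V) (v : V), SW H a → SW H (insert v a) :=
  fun _ v ⟨w, hw⟩ => ⟨w, fun u hu => Finset.mem_insert_of_mem (hw u hu)⟩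

lemma card_union_inserts (x s d : V) (a b : Finset V) :
    (insert x (insert s a) ∪ insert d b).card ≤ (a ∪ b).card + 3 := by
  have hsub : insert x (insert s a) ∪ insert d b ⊆ insert x (insert s (insert d (a ∪ b))) := by
    intro y hy
    simp only [Finset.mem_union, Finset.mem_insert] at *
    tauto
  have h1 := Finset.card_le_card hsub
  have h2 := Finset.card_insert_le x (insert s (insert d (a ∪ b)))
  have h3 := Finset.card_insert_le s (insert d (a ∪ b))
  have h4 := Finset.card_insert_le d (a ∪ b)
  omega

lemma staller_threat (H : SimpleGraph V) (m : ℕ) (a b : Finset V) (s x : V)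
    (hs : s ∉ a ∪ b) (hx : x ∉ a ∪ b) (hsx : x ≠ s)
    (ht : SW H (insert x (insert s a)))
    (hcard : (a ∪ b).card + (m + 3) ≤ Fintype.card V)
    (hcont : WinsAux (fun a _ => SW H a) (m + 1) true (insert s a) (insert x b)) :
    WinsAux (fun a _ => SW H a) (m + 3) true a b := by
  refine ⟨s, Finset.mem_sdiff.mpr ⟨Finset.mem_univ _, hs⟩, ?_⟩
  intro d hd
  rw [Finset.mem_sdiff, Finset.mem_union, Finset.mem_insert] at hd
  by_cases hdx : d = x
  · subst hdx; exact hcont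
  · refine ⟨x, ?_, ?_⟩
    · rw [Finset.mem_sdiff, Finset.mem_union, Finset.mem_insert, Finset.mem_insert]
      push_neg
      refine ⟨Finset.mem_univ _, ⟨hsx, fun h => hx (Finset.mem_union_left _ h)⟩,
        fun h => hdx h.symm, fun h => hx (Finset.mem_union_right _ h)⟩
    · refine winsAux_of_achieved (SW H) (sw_mono H) m false _ _ ht ?_
      have := card_union_inserts x s d a b
      omega

lemma staller_double (H : SimpleGraph V) (m : ℕ) (a b : Finset V) (s x1 x2 : V)
    (hs : s ∉ a ∪ b) (h1 : x1 ∉ a ∪ b) (h2 : x2 ∉ a ∪ b)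
    (h1s : x1 ≠ s) (h2s : x2 ≠ s) (h12 : x1 ≠ x2)
    (ht1 : SW H (insert x1 (insert s a)))
    (ht2 : SW H (insert x2 (insert s a)))
    (hcard : (a ∪ b).card + (m + 3) ≤ Fintype.card V) :
    WinsAux (fun a _ => SW H a) (m + 3) true a b := by
  refine ⟨s, Finset.mem_sdiff.mpr ⟨Finset.mem_univ _, hs⟩, ?_⟩
  intro d hd
  rw [Finset.mem_sdiff, Finset.mem_union, Finset.mem_insert] at hd
  have key : ∀ x : V, x ∉ a ∪ b → x ≠ s → x ≠ d → SW H (insert x (insert s a)) →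
      WinsAux (fun a _ => SW H a) (m + 1) true (insert s a) (insert d b) := by
    intro x hx hxs hxd ht
    refine ⟨x, ?_, ?_⟩
    · rw [Finset.mem_sdiff, Finset.mem_union, Finset.mem_insert, Finset.mem_insert]
      push_neg
      exact ⟨Finset.mem_univ _, ⟨hxs, fun h => hx (Finset.mem_union_left _ h)⟩,
        hxd, fun h => hx (Finset.mem_union_right _ h)⟩
    · refine winsAux_of_achieved (SW H) (sw_mono H) m false _ _ ht ?_
      have := card_union_inserts x s d a b
      omega
  by_cases hd1 : d = x1
  · exact key x2 h2 h2s (fun h => h12 ((hd1.symm.trans h.symm).symm ▸ rfl)) ht2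
  · exact key x1 h1 h1s (fun h => hd1 h.symm) ht1

/-! ### Fin arithmetic and prism facts -/

open SimpleGraph
open Fin.NatCast Fin.CommRing

omit [Fintype V] [DecidableEq V]

lemma fin2_cases {i x : Fin 2} (h : x ≠ i) : x = i + 1 := by
  fin_cases i <;> fin_cases x <;> simp_all <;> rfl

lemma fin2_succ_ne (i : Fin 2) : i + 1 ≠ i := by fin_cases i <;> decide

lemma fin2_succ_succ (i : Fin 2) : i + 1 + 1 = i := by fin_cases i <;> decide

lemma path2_adj {i i' : Fin 2} : (pathGraph 2).Adj i i' ↔ i' ≠ i := by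
  fin_cases i <;> fin_cases i' <;> simp [pathGraph_adj] <;> decide

section Prism

variable {k : ℕ}

lemma fcast (hk : 1 ≤ k) {a b : ℕ} (ha : a < 2*k+1) (hb : b < 2*k+1) :
    ((a : Fin (2*k+1)) = (b : Fin (2*k+1))) ↔ a = b := by
  rw [Fin.ext_iff, Fin.val_natCast, Fin.val_natCast, Nat.mod_eq_of_lt ha, Nat.mod_eq_of_lt hb]

lemma castmod (a : ℕ) : ((a % (2*k+1) : ℕ) : Fin (2*k+1)) = (a : Fin (2*k+1)) := by
  rw [Fin.ext_iff, Fin.val_natCast, Fin.val_natCast]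
  exact Nat.mod_mod_of_dvd a dvd_rfl

lemma val1 (hk : 1 ≤ k) {w : Fin (2*k+1)} : w.val = 1 ↔ w = 1 := by
  rw [Fin.ext_iff, Fin.val_one', Nat.mod_eq_of_lt (by omega)]

lemma cyc_adj (hk : 1 ≤ k) {u v : Fin (2*k+1)} :
    (cycleGraph (2*k+1)).Adj u v ↔ u = v + 1 ∨ v = u + 1 := by
  rw [cycleGraph_adj', val1 hk, val1 hk, sub_eq_iff_eq_add, sub_eq_iff_eq_add,
    add_comm (1:Fin (2*k+1)) v, add_comm (1:Fin (2*k+1)) u]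

lemma cast2k (hk : 1 ≤ k) : ((2*k : ℕ) : Fin (2*k+1)) = -1 := by
  have h := Fin.natCast_self (2*k+1)
  have h2 : ((2*k+1 : ℕ) : Fin (2*k+1)) = ((2*k : ℕ) : Fin (2*k+1)) + 1 := by push_cast; ring
  rw [h2] at h
  linear_combination h

lemma prism_adj (hk : 1 ≤ k) {u : Fin 2 × Fin (2*k+1)} {i : Fin 2} {q : Fin (2*k+1)} :
    (pathGraph 2 □ cycleGraph (2*k+1)).Adj u (i, q) ↔
      u = (i+1, q) ∨ u = (i, q+1) ∨ u = (i, q-1) := by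
  obtain ⟨a, b⟩ := u
  rw [boxProd_adj]
  simp only [path2_adj, cyc_adj hk, Prod.mk.injEq]
  constructor
  · rintro (⟨h1, h2⟩ | ⟨(h1 | h1), h2⟩)
    · exact Or.inl ⟨fin2_cases (Ne.symm h1), h2⟩
    · exact Or.inr (Or.inl ⟨h2, h1⟩)
    · refine Or.inr (Or.inr ⟨h2, ?_⟩)
      rw [h1]; ring
  · rintro (⟨h1, h2⟩ | ⟨h1, h2⟩ | ⟨h1, h2⟩)
    · exact Or.inl ⟨h1 ▸ (fin2_succ_ne i).symm, h2⟩
    · exact Or.inr ⟨Or.inl h2, h1⟩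
    · refine Or.inr ⟨Or.inr ?_, h1⟩
      rw [h2]; ring

/-- vertices in different rows differ -/
lemma vne_row {i : Fin 2} {q q' : Fin (2*k+1)} : ((i+1, q) : Fin 2 × Fin (2*k+1)) ≠ (i, q') :=
  fun h => fin2_succ_ne i (congrArg Prod.fst h)

lemma vne_row' {i : Fin 2} {q q' : Fin (2*k+1)} : ((i, q) : Fin 2 × Fin (2*k+1)) ≠ (i+1, q') :=
  fun h => fin2_succ_ne i (congrArg Prod.fst h).symm

/-- vertices in the same row with distinct small offsets differ -/
lemma vne_col (hk : 1 ≤ k) {i : Fin 2} {j : Fin (2*k+1)} {a b : ℕ}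
    (ha : a < 2*k+1) (hb : b < 2*k+1) (hab : a ≠ b) :
    ((i, j + (a : Fin (2*k+1))) : Fin 2 × Fin (2*k+1)) ≠ (i, j + (b : Fin (2*k+1))) := by
  intro h
  have h2 := congrArg Prod.snd h
  simp only at h2
  exact hab ((fcast hk ha hb).mp (add_left_cancel h2))

end Prism

section Prism2

variable {k : ℕ}
open SimpleGraph

lemma vpair {i : Fin 2} {j : Fin (2*k+1)} {e1 e2 : Fin (2*k+1)} (h : e1 = e2) :
    ((i, j + e1) : Fin 2 × Fin (2*k+1)) = (i, j + e2) := by rw [h]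

lemma hcardV : Fintype.card (Fin 2 × Fin (2*k+1)) = 4*k+2 := by
  simp [Fintype.card_prod]
  omega

lemma vmk {k : ℕ} {i i' : Fin 2} {q q' : Fin (2*k+1)} (h1 : i = i') (h2 : q = q') :
    ((i,q) : Fin 2 × Fin (2*k+1)) = (i',q') := by rw [h1, h2]

lemma staller_rung (hk : 1 ≤ k) (i : Fin 2) (j : Fin (2*k+1)) :
    StallerWinsMBTD
      ((pathGraph 2 □ cycleGraph (2*k+1)).deleteEdges {s((i,j),(i+1,j))}) false := by
  unfold StallerWinsMBTD
  set Gd := (pathGraph 2 □ cycleGraph (2*k+1)).deleteEdges {s((i,j),(i+1,j))} with hGd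
  show WinsAux (fun a _ => SW Gd a) (Fintype.card (Fin 2 × Fin (2*k+1))) true ∅ ∅
  have hadj : ∀ (u v : Fin 2 × Fin (2*k+1)), Gd.Adj u v →
      (pathGraph 2 □ cycleGraph (2*k+1)).Adj u v ∧
        s(u,v) ≠ s(((i,j) : Fin 2 × Fin (2*k+1)),(i+1,j)) := by
    intro u v h
    rw [hGd, deleteEdges_adj] at h
    exact ⟨h.1, fun hh => h.2 hh⟩
  rw [hcardV, show 4*k+2 = (4*k-1)+3 from by omega]
  have h3lt : 3 % (2*k+1) < 2*k+1 := Nat.mod_lt _ (by omega)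
  have h3cases : (k = 1 ∧ 3 % (2*k+1) = 0) ∨ (2 ≤ k ∧ 3 % (2*k+1) = 3) := by
    rcases Nat.lt_or_ge k 2 with h | h
    · left
      have hk1 : k = 1 := by omega
      subst hk1; exact ⟨rfl, rfl⟩
    · right; exact ⟨h, Nat.mod_eq_of_lt (by omega)⟩
  apply staller_threat Gd (4*k-1) ∅ ∅ (i, j + ((1:ℕ) : Fin (2*k+1))) (i, j + ((2*k:ℕ) : Fin (2*k+1)))
  · simp
  · simp
  · exact vne_col hk (by omega) (by omega) (by omega)
  · -- threat at (i,j)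
    refine ⟨(i, j), ?_⟩
    intro u hu
    obtain ⟨hu1, hu2⟩ := hadj u (i,j) hu
    rcases (prism_adj hk).mp hu1 with h | h | h
    · subst h; exact absurd Sym2.eq_swap hu2
    · subst h
      rw [show ((i, j+1) : Fin 2 × Fin (2*k+1)) = (i, j + ((1:ℕ) : Fin (2*k+1))) from
        vmk rfl (by push_cast; ring)]
      exact Finset.mem_insert_of_mem (Finset.mem_insert_self _ _)
    · subst h
      rw [show ((i, j-1) : Fin 2 × Fin (2*k+1)) = (i, j + ((2*k:ℕ) : Fin (2*k+1))) from
        vmk rfl (by rw [cast2k hk, sub_eq_add_neg])]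
      exact Finset.mem_insert_self _ _
  · rw [hcardV]
    simp
    omega
  · -- continuation: double threat
    rw [show 4*k-1+1 = (4*k-3)+3 from by omega]
    apply staller_double Gd (4*k-3) _ _ (i+1, j + ((2:ℕ) : Fin (2*k+1)))
      (i+1, j + ((0:ℕ) : Fin (2*k+1))) (i, j + ((3 % (2*k+1) :ℕ) : Fin (2*k+1)))
    · simp only [Finset.union_empty, Finset.mem_union, Finset.mem_insert, Finset.mem_singleton,
        Finset.notMem_empty, or_false]
      push_neg
      exact ⟨vne_row, vne_row⟩
    · simp only [Finset.union_empty, Finset.mem_union, Finset.mem_insert, Finset.mem_singleton,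
        Finset.notMem_empty, or_false]
      push_neg
      exact ⟨vne_row, vne_row⟩
    · simp only [Finset.union_empty, Finset.mem_union, Finset.mem_insert, Finset.mem_singleton,
        Finset.notMem_empty, or_false]
      push_neg
      constructor
      · apply vne_col hk h3lt (by omega)
        rcases h3cases with ⟨h1, h2⟩ | ⟨h1, h2⟩ <;> omega
      · apply vne_col hk h3lt (by omega)
        rcases h3cases with ⟨h1, h2⟩ | ⟨h1, h2⟩ <;> omega
    · exact vne_col hk (by omega) (by omega) (by omega)
    · exact vne_row'
    · exact vne_row
    · -- threat 1 : vertex (i+1, j+1)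
      refine ⟨(i+1, j + ((1:ℕ) : Fin (2*k+1))), ?_⟩
      intro u hu
      obtain ⟨hu1, -⟩ := hadj u _ hu
      rcases (prism_adj hk).mp hu1 with h | h | h
      · subst h
        rw [show ((i+1+1, j + ((1:ℕ) : Fin (2*k+1))) : Fin 2 × Fin (2*k+1)) =
            (i, j + ((1:ℕ) : Fin (2*k+1))) from vmk (fin2_succ_succ i) rfl]
        exact Finset.mem_insert_of_mem (Finset.mem_insert_of_mem (Finset.mem_insert_self _ _))
      · subst h
        rw [show ((i+1, j + ((1:ℕ) : Fin (2*k+1)) + 1) : Fin 2 × Fin (2*k+1)) =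
            (i+1, j + ((2:ℕ) : Fin (2*k+1))) from vmk rfl (by push_cast; ring)]
        exact Finset.mem_insert_of_mem (Finset.mem_insert_self _ _)
      · subst h
        rw [show ((i+1, j + ((1:ℕ) : Fin (2*k+1)) - 1) : Fin 2 × Fin (2*k+1)) =
            (i+1, j + ((0:ℕ) : Fin (2*k+1))) from vmk rfl (by push_cast; ring)]
        exact Finset.mem_insert_self _ _
    · -- threat 2 : vertex (i, j+2)
      refine ⟨(i, j + ((2:ℕ) : Fin (2*k+1))), ?_⟩
      intro u hu
      obtain ⟨hu1, -⟩ := hadj u _ hu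
      rcases (prism_adj hk).mp hu1 with h | h | h
      · subst h
        exact Finset.mem_insert_of_mem (Finset.mem_insert_self _ _)
      · subst h
        rw [show ((i, j + ((2:ℕ) : Fin (2*k+1)) + 1) : Fin 2 × Fin (2*k+1)) =
            (i, j + ((3 % (2*k+1) : ℕ) : Fin (2*k+1))) from
          vmk rfl (by rw [castmod]; push_cast; ring)]
        exact Finset.mem_insert_self _ _
      · subst h
        rw [show ((i, j + ((2:ℕ) : Fin (2*k+1)) - 1) : Fin 2 × Fin (2*k+1)) =
            (i, j + ((1:ℕ) : Fin (2*k+1))) from vmk rfl (by push_cast; ring)]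
        exact Finset.mem_insert_of_mem (Finset.mem_insert_of_mem (Finset.mem_insert_self _ _))
    · rw [hcardV]
      have hle := Finset.card_union_le
        (insert ((i, j + ((1:ℕ) : Fin (2*k+1)))) (∅ : Finset (Fin 2 × Fin (2*k+1))))
        (insert ((i, j + ((2*k:ℕ) : Fin (2*k+1)))) (∅ : Finset (Fin 2 × Fin (2*k+1))))
      simp only [Finset.card_insert_of_notMem (Finset.notMem_empty _), Finset.card_empty] at hle
      omega


lemma staller_chain (hk : 1 ≤ k) (i : Fin 2) (j : Fin (2*k+1)) :
    ∀ c : ℕ, 1 ≤ c → c ≤ k → ∀ A B : Finset (Fin 2 × Fin (2*k+1)),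
    (∀ v ∈ A, ∃ r : ℕ, 1 ≤ r ∧ r ≤ k - c ∧ v = (i, j + ((2*r : ℕ) : Fin (2*k+1)))) →
    (∀ v ∈ B, ∃ r : ℕ, 1 ≤ r ∧ r ≤ k - c ∧ v = (i+1, j + ((2*r-1 : ℕ) : Fin (2*k+1)))) →
    (A ∪ B).card = 2*(k-c) →
    (∀ u, ((pathGraph 2 □ cycleGraph (2*k+1)).deleteEdges {s((i,j),(i,j+1))}).Adj u
        (i, j + ((2*(k-c)+1 : ℕ) : Fin (2*k+1))) →
      u ∈ insert (i+1, j + ((2*(k-c)+1 : ℕ) : Fin (2*k+1)))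
            (insert (i, j + ((2*(k-c)+2 : ℕ) : Fin (2*k+1))) A)) →
    WinsAux (fun a _ =>
        SW ((pathGraph 2 □ cycleGraph (2*k+1)).deleteEdges {s((i,j),(i,j+1))}) a)
      (2*k+2*c+2) true A B := by
  set Gd := (pathGraph 2 □ cycleGraph (2*k+1)).deleteEdges {s((i,j),(i,j+1))} with hGd
  have hadj : ∀ (u v : Fin 2 × Fin (2*k+1)), Gd.Adj u v →
      (pathGraph 2 □ cycleGraph (2*k+1)).Adj u v ∧
        s(u,v) ≠ s(((i,j) : Fin 2 × Fin (2*k+1)),(i,j+1)) := by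
    intro u v h
    rw [hGd, deleteEdges_adj] at h
    exact ⟨h.1, fun hh => h.2 hh⟩
  refine Nat.le_induction ?_ ?_
  · -- base case c = 1 : double threat
    intro hk1 A B hA hB hC hthreat
    rw [show 2*k+2*1+2 = (2*k+1)+3 from by omega]
    apply staller_double Gd (2*k+1) A B (i, j + ((2*(k-1)+2 : ℕ) : Fin (2*k+1)))
      (i+1, j + ((2*(k-1)+1 : ℕ) : Fin (2*k+1))) (i+1, j + ((0 : ℕ) : Fin (2*k+1)))
    · intro hmem
      rcases Finset.mem_union.mp hmem with hm | hm
      · obtain ⟨r, hr1, hr2, hv⟩ := hA _ hm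
        exact vne_col hk (by omega) (by omega) (by omega) hv
      · obtain ⟨r, hr1, hr2, hv⟩ := hB _ hm
        exact vne_row' hv
    · intro hmem
      rcases Finset.mem_union.mp hmem with hm | hm
      · obtain ⟨r, hr1, hr2, hv⟩ := hA _ hm
        exact vne_row hv
      · obtain ⟨r, hr1, hr2, hv⟩ := hB _ hm
        exact vne_col hk (by omega) (by omega) (by omega) hv
    · intro hmem
      rcases Finset.mem_union.mp hmem with hm | hm
      · obtain ⟨r, hr1, hr2, hv⟩ := hA _ hm
        exact vne_row hv
      · obtain ⟨r, hr1, hr2, hv⟩ := hB _ hm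
        exact vne_col hk (by omega) (by omega) (by omega) hv
    · exact vne_row
    · exact vne_row
    · exact vne_col hk (by omega) (by omega) (by omega)
    · exact ⟨(i, j + ((2*(k-1)+1 : ℕ) : Fin (2*k+1))), fun u hu => hthreat u hu⟩
    · -- second threat at (i,j)
      refine ⟨(i, j), ?_⟩
      intro u hu
      obtain ⟨hu1, hu2⟩ := hadj u (i,j) hu
      rcases (prism_adj hk).mp hu1 with h | h | h
      · subst h
        rw [show ((i+1, j) : Fin 2 × Fin (2*k+1)) = (i+1, j + ((0:ℕ) : Fin (2*k+1))) from
          vmk rfl (by push_cast; ring)]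
        exact Finset.mem_insert_self _ _
      · subst h
        exact absurd Sym2.eq_swap hu2
      · subst h
        rw [show ((i, j-1) : Fin 2 × Fin (2*k+1)) = (i, j + ((2*(k-1)+2:ℕ) : Fin (2*k+1))) from
          vmk rfl (by rw [show 2*(k-1)+2 = 2*k from by omega, cast2k hk, sub_eq_add_neg])]
        exact Finset.mem_insert_of_mem (Finset.mem_insert_self _ _)
    · rw [hcardV]
      omega
  · -- inductive step : from c to c+1
    intro c hc IH hck A B hA hB hC hthreat
    rw [show 2*k+2*(c+1)+2 = (2*k+2*c+1)+3 from by omega]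
    apply staller_threat Gd (2*k+2*c+1) A B (i, j + ((2*(k-(c+1))+2 : ℕ) : Fin (2*k+1)))
      (i+1, j + ((2*(k-(c+1))+1 : ℕ) : Fin (2*k+1)))
    · intro hmem
      rcases Finset.mem_union.mp hmem with hm | hm
      · obtain ⟨r, hr1, hr2, hv⟩ := hA _ hm
        exact vne_col hk (by omega) (by omega) (by omega) hv
      · obtain ⟨r, hr1, hr2, hv⟩ := hB _ hm
        exact vne_row' hv
    · intro hmem
      rcases Finset.mem_union.mp hmem with hm | hm
      · obtain ⟨r, hr1, hr2, hv⟩ := hA _ hm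
        exact vne_row hv
      · obtain ⟨r, hr1, hr2, hv⟩ := hB _ hm
        exact vne_col hk (by omega) (by omega) (by omega) hv
    · exact vne_row
    · exact ⟨(i, j + ((2*(k-(c+1))+1 : ℕ) : Fin (2*k+1))), fun u hu => hthreat u hu⟩
    · rw [hcardV]
      omega
    · rw [show 2*k+2*c+1+1 = 2*k+2*c+2 from by omega]
      have hs_notmem : (i, j + ((2*(k-(c+1))+2 : ℕ) : Fin (2*k+1))) ∉ A ∪ B := by
        intro hmem
        rcases Finset.mem_union.mp hmem with hm | hm
        · obtain ⟨r, hr1, hr2, hv⟩ := hA _ hm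
          exact vne_col hk (by omega) (by omega) (by omega) hv
        · obtain ⟨r, hr1, hr2, hv⟩ := hB _ hm
          exact vne_row' hv
      have hx_notmem : (i+1, j + ((2*(k-(c+1))+1 : ℕ) : Fin (2*k+1))) ∉ A ∪ B := by
        intro hmem
        rcases Finset.mem_union.mp hmem with hm | hm
        · obtain ⟨r, hr1, hr2, hv⟩ := hA _ hm
          exact vne_row hv
        · obtain ⟨r, hr1, hr2, hv⟩ := hB _ hm
          exact vne_col hk (by omega) (by omega) (by omega) hv
      apply IH (by omega)
      · -- hA'
        intro v hv
        rcases Finset.mem_insert.mp hv with rfl | hv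
        · refine ⟨k - c, by omega, le_refl _, ?_⟩
          rw [show 2*(k-c) = 2*(k-(c+1))+2 from by omega]
        · obtain ⟨r, hr1, hr2, hveq⟩ := hA _ hv
          exact ⟨r, hr1, by omega, hveq⟩
      · -- hB'
        intro v hv
        rcases Finset.mem_insert.mp hv with rfl | hv
        · refine ⟨k - c, by omega, le_refl _, ?_⟩
          rw [show 2*(k-c)-1 = 2*(k-(c+1))+1 from by omega]
        · obtain ⟨r, hr1, hr2, hveq⟩ := hB _ hv
          exact ⟨r, hr1, by omega, hveq⟩
      · -- card
        rw [Finset.insert_union, Finset.union_insert, Finset.card_insert_of_notMem,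
          Finset.card_insert_of_notMem hx_notmem]
        · omega
        · rw [Finset.mem_insert]
          push_neg
          exact ⟨vne_row', hs_notmem⟩
      · -- new threat
        intro u hu
        obtain ⟨hu1, -⟩ := hadj u _ hu
        rcases (prism_adj hk).mp hu1 with h | h | h
        · subst h
          exact Finset.mem_insert_self _ _
        · subst h
          rw [show ((i, j + ((2*(k-c)+1:ℕ) : Fin (2*k+1)) + 1) : Fin 2 × Fin (2*k+1)) =
              (i, j + ((2*(k-c)+2:ℕ) : Fin (2*k+1))) from vmk rfl (by push_cast; ring)]
          exact Finset.mem_insert_of_mem (Finset.mem_insert_self _ _)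
        · subst h
          rw [show ((i, j + ((2*(k-c)+1:ℕ) : Fin (2*k+1)) - 1) : Fin 2 × Fin (2*k+1)) =
              (i, j + ((2*(k-(c+1))+2:ℕ) : Fin (2*k+1))) from
            vmk rfl (by rw [show 2*(k-(c+1))+2 = 2*(k-c) from by omega]; push_cast; ring)]
          exact Finset.mem_insert_of_mem (Finset.mem_insert_of_mem (Finset.mem_insert_self _ _))

lemma staller_cyc (hk : 1 ≤ k) (i : Fin 2) (j : Fin (2*k+1)) :
    StallerWinsMBTD
      ((pathGraph 2 □ cycleGraph (2*k+1)).deleteEdges {s((i,j),(i,j+1))}) false := by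
  unfold StallerWinsMBTD
  show WinsAux (fun a _ =>
      SW ((pathGraph 2 □ cycleGraph (2*k+1)).deleteEdges {s((i,j),(i,j+1))}) a)
    (Fintype.card (Fin 2 × Fin (2*k+1))) true ∅ ∅
  rw [hcardV, show 4*k+2 = 2*k+2*k+2 from by omega]
  apply staller_chain hk i j k hk (le_refl k) ∅ ∅ (by simp) (by simp) (by simp)
  intro u hu
  rw [deleteEdges_adj] at hu
  obtain ⟨hu1, hu2⟩ := hu
  rcases (prism_adj hk).mp hu1 with h | h | h
  · subst h
    exact Finset.mem_insert_self _ _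
  · subst h
    rw [show ((i, j + ((2*(k-k)+1:ℕ) : Fin (2*k+1)) + 1) : Fin 2 × Fin (2*k+1)) =
        (i, j + ((2*(k-k)+2:ℕ) : Fin (2*k+1))) from vmk rfl (by push_cast; ring)]
    exact Finset.mem_insert_of_mem (Finset.mem_insert_self _ _)
  · subst h
    exfalso
    apply hu2
    have e1 : ((i, j + ((2*(k-k)+1:ℕ) : Fin (2*k+1)) - 1) : Fin 2 × Fin (2*k+1)) = (i, j) := by
      refine vmk rfl ?_
      rw [show 2*(k-k)+1 = 1 from by omega]
      push_cast
      ring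
    have e2 : ((i, j + ((2*(k-k)+1:ℕ) : Fin (2*k+1))) : Fin 2 × Fin (2*k+1)) = (i, j+1) := by
      refine vmk rfl ?_
      rw [show 2*(k-k)+1 = 1 from by omega]
      push_cast
      ring
    rw [e1, e2]
    exact rfl



def pmap {k : ℕ} : Fin 2 × Fin (2*k+1) → Fin 2 × Fin (2*k+1) :=
  fun v => (v.1 + 1, if v.1 = 0 then v.2 + 1 else v.2 - 1)

lemma pmap_invol (v : Fin 2 × Fin (2*k+1)) : pmap (pmap v) = v := by
  obtain ⟨i, q⟩ := v
  fin_cases i <;> simp [pmap] <;> ring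

lemma pmap_ne (v : Fin 2 × Fin (2*k+1)) : pmap v ≠ v := by
  intro h
  exact fin2_succ_ne v.1 (congrArg Prod.fst h)

lemma pmap_dom (hk : 1 ≤ k) (v : Fin 2 × Fin (2*k+1)) :
    ∃ u, (pathGraph 2 □ cycleGraph (2*k+1)).Adj u v ∧
      (pathGraph 2 □ cycleGraph (2*k+1)).Adj (pmap u) v := by
  obtain ⟨i, q⟩ := v
  by_cases hi : i = 0
  · subst hi
    refine ⟨(0, q - 1), ?_, ?_⟩
    · rw [boxProd_adj]
      exact Or.inr ⟨(cyc_adj hk).mpr (Or.inr (by ring)), rfl⟩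
    · have : pmap (0, q-1) = (1, q) := by simp [pmap]
      rw [this, boxProd_adj]
      refine Or.inl ⟨path2_adj.mpr ?_, rfl⟩
      first
      | exact (by decide : (1 : Fin 2) ≠ 0)
      | exact (by decide : (0 : Fin 2) ≠ 1)
  · have hi1 : i = 1 := by fin_cases i <;> simp_all
    subst hi1
    refine ⟨(0, q), ?_, ?_⟩
    · rw [boxProd_adj]
      refine Or.inl ⟨path2_adj.mpr ?_, rfl⟩
      first
      | exact (by decide : (1 : Fin 2) ≠ 0)
      | exact (by decide : (0 : Fin 2) ≠ 1)
    · have : pmap ((0 : Fin 2), q) = (1, q + 1) := by simp [pmap]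
      rw [this, boxProd_adj]
      exact Or.inr ⟨(cyc_adj hk).mpr (Or.inl rfl), rfl⟩

lemma prism_isD (hk : 1 ≤ k) : IsD (pathGraph 2 □ cycleGraph (2*k+1)) := by
  constructor <;>
  · unfold DominatorWinsMBTD
    apply pairing_strategy _ pmap pmap_invol pmap_ne (pmap_dom hk)
    · simp
    · intro x hx
      simp at hx

end Prism2



/-- for `k ≥ 1` the prism `P₂ □ C_{2k+1}` is `𝒟`-minimal:
it is a `𝒟` graph, but deleting any edge yields a graph that is not `𝒟`. -/
theorem stmt17 (k : ℕ) (hk : 1 ≤ k) :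
    IsD (SimpleGraph.pathGraph 2 □ SimpleGraph.cycleGraph (2 * k + 1)) ∧
    ∀ e ∈ (SimpleGraph.pathGraph 2 □ SimpleGraph.cycleGraph (2 * k + 1)).edgeSet,
      ¬ IsD ((SimpleGraph.pathGraph 2 □ SimpleGraph.cycleGraph (2 * k + 1)).deleteEdges {e}) := by
  constructor
  · exact prism_isD hk
  · intro e he
    induction e with
    | _ x y =>
    intro hIsD
    have hxy : (pathGraph 2 □ cycleGraph (2*k+1)).Adj x y := (SimpleGraph.mem_edgeSet _).mp he
    obtain ⟨i1, q1⟩ := x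
    obtain ⟨i2, q2⟩ := y
    rw [boxProd_adj] at hxy
    dsimp only at hxy hIsD he ⊢
    have hstall : StallerWinsMBTD
        ((pathGraph 2 □ cycleGraph (2*k+1)).deleteEdges {s(((i1,q1) : Fin 2 × Fin (2*k+1)), (i2,q2))}) false := by
      rcases hxy with ⟨hp, h2⟩ | ⟨hc, h1⟩
      · -- rung edge
        have hi : i2 = i1 + 1 := fin2_cases (path2_adj.mp hp)
        subst hi
        subst h2
        exact staller_rung hk i1 q1
      · -- cycle edge
        subst h1
        rcases (cyc_adj hk).mp hc with h | h
        · -- q1 = q2 + 1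
          subst h
          rw [Sym2.eq_swap]
          exact staller_cyc hk i1 q2
        · subst h
          exact staller_cyc hk i1 q1
    exact staller_not_dominator _ false hstall hIsD.2

end MBTD
end

section
/- Let T be a finite nonempty tree. For the Maker–Breaker total domination game, T is an N graph if and only if T is isomorphic to the star K_{1,n} for some n ≥ 2; otherwise T is an S graph. -/
/-!
Staller wins as soon as she owns the whole neighbourhood of some vertex, so claiming a support
vertex `s` (the only possible neighbour of some vertex) wins for her. If a tree has two distinct
support vertices, Staller claims one of them with her first move, whoever starts. A nontrivial
tree with a single support vertex `c` is the star centred at `c`: a vertex farthest from `c` is a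
leaf, so its neighbour is `c`, and every vertex is within distance one of `c`. On a star with at
least two leaves the first player wins: Dominator claims the centre and then any leaf, Staller
claims the centre. The one-vertex tree is lost for Dominator, its vertex having no neighbour.
Playing two winning strategies for the same game against each other is impossible, so the
stars are exactly the `𝒩` trees.
-/

namespace MBTD

variable {V : Type*} [Fintype V] [DecidableEq V]

open Finset SimpleGraph

section Goals

variable {V : Type*} {G : SimpleGraph V}

lemma monotone_isTotalDomSet : Monotone (IsTotalDomSet G) :=
  fun _ _ hab ha v => (ha v).imp fun _ ⟨hu, hadj⟩ => ⟨hab hu, hadj⟩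

lemma monotone_exists_forall_adj_mem :
    Monotone fun a : Finset V => ∃ v, ∀ u, G.Adj u v → u ∈ a :=
  fun _ _ hab ⟨v, hv⟩ => ⟨v, fun u hu => hab (hv u hu)⟩

def IsSupportVertex (G : SimpleGraph V) (s : V) : Prop :=
  ∃ v, ∀ u, G.Adj u v → u = s

lemma IsSupportVertex.exists_forall_adj_mem {s : V} (hs : IsSupportVertex G s) {a : Finset V}
    (ha : s ∈ a) : ∃ v, ∀ u, G.Adj u v → u ∈ a :=
  let ⟨v, hv⟩ := hs
  ⟨v, fun u hu => hv u hu ▸ ha⟩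

lemma isTotalDomSet_starGraph {c u : V} (hu : u ≠ c) {a : Finset V} (hc : c ∈ a) (hua : u ∈ a) :
    IsTotalDomSet (starGraph c) a := fun w => by
  by_cases hw : w = c
  · exact ⟨u, hua, by simp [hw, hu]⟩
  · exact ⟨c, hc, by simp [Ne.symm hw]⟩

end Goals

section Game

variable {V : Type*} [Fintype V] [DecidableEq V]

lemma card_univ_sdiff_insert_add_one {s : Finset V} {v : V} (hv : v ∈ univ \ s) :
    (univ \ insert v s).card + 1 = (univ \ s).card := by
  rw [sdiff_insert, card_erase_add_one hv]

lemma le_card_univ_sdiff {s : Finset V} {n : ℕ} (h : n + s.card ≤ Fintype.card V) :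
    n ≤ (univ \ s).card := by
  rw [card_univ_sdiff]
  omega

lemma winsAux_of_monotone {P : Finset V → Prop} (hP : Monotone P) :
    ∀ {n : ℕ} {t : Bool} {a b : Finset V}, n ≤ (univ \ (a ∪ b)).card → P a →
      WinsAux (fun a _ => P a) n t a b
  | 0, _, _, _, _, ha => ha
  | n + 1, true, a, b, hn, ha => by
    obtain ⟨v, hv⟩ := card_pos.mp (show 0 < (univ \ (a ∪ b)).card by omega)
    have hcard := card_univ_sdiff_insert_add_one hv
    rw [← insert_union] at hcard
    exact ⟨v, hv, winsAux_of_monotone hP (by omega) (hP (subset_insert v a) ha)⟩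
  | n + 1, false, a, b, hn, ha => fun v hv => by
    have hcard := card_univ_sdiff_insert_add_one hv
    rw [← union_insert] at hcard
    exact winsAux_of_monotone hP (by omega) ha

lemma winsAux_playoff (win₁ win₂ : Finset V → Finset V → Prop) :
    ∀ {n : ℕ} {t : Bool} {a b : Finset V}, Disjoint a b →
      WinsAux win₁ n t a b → WinsAux win₂ n (!t) b a →
      ∃ a' b', Disjoint a' b' ∧ win₁ a' b' ∧ win₂ b' a'
  | 0, _, a, b, hab, h₁, h₂ => ⟨a, b, hab, h₁, h₂⟩
  | n + 1, true, a, b, hab, ⟨v, hv, h₁⟩, h₂ => by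
    have hv' : v ∉ a ∪ b := (mem_sdiff.mp hv).2
    refine winsAux_playoff win₁ win₂ ?_ h₁ (h₂ v (by rwa [union_comm]))
    exact disjoint_insert_left.mpr ⟨fun hvb => hv' (mem_union_right a hvb), hab⟩
  | n + 1, false, a, b, hab, h₁, ⟨v, hv, h₂⟩ => by
    have hv' : v ∉ b ∪ a := (mem_sdiff.mp hv).2
    refine winsAux_playoff win₁ win₂ ?_ (h₁ v (by rwa [union_comm])) h₂
    exact disjoint_insert_right.mpr ⟨fun hva => hv' (mem_union_right b hva), hab⟩

variable {G : SimpleGraph V}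

lemma not_dominatorWinsMBTD_and_stallerWinsMBTD (dFirst : Bool) :
    ¬ (DominatorWinsMBTD G dFirst ∧ StallerWinsMBTD G dFirst) := by
  rintro ⟨hD, hS⟩
  obtain ⟨a, b, hab, hdom, v, hv⟩ := winsAux_playoff _ _ (disjoint_empty_left ∅) hD hS
  obtain ⟨u, hu, huv⟩ := hdom v
  exact disjoint_left.mp hab hu (hv u huv)

lemma isS_of_forall_not_adj {v : V} (hv : ∀ u, ¬ G.Adj u v) : IsS G := by
  have hwin (dFirst : Bool) : StallerWinsMBTD G dFirst :=
    winsAux_of_monotone monotone_exists_forall_adj_mem (by simp)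
      ⟨v, fun u hu => absurd hu (hv u)⟩
  exact ⟨hwin true, hwin false⟩

lemma stallerWinsMBTD_false_of_isSupportVertex {s : V} (hs : IsSupportVertex G s) :
    StallerWinsMBTD G false := by
  have : Nonempty V := ⟨s⟩
  obtain ⟨k, hk⟩ : ∃ k, Fintype.card V = k + 1 :=
    Nat.exists_eq_succ_of_ne_zero Fintype.card_ne_zero
  unfold StallerWinsMBTD
  rw [hk]
  refine ⟨s, by simp, winsAux_of_monotone monotone_exists_forall_adj_mem ?_
    (hs.exists_forall_adj_mem (mem_insert_self s ∅))⟩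
  exact le_card_univ_sdiff (by simp [hk])

lemma isS_of_isSupportVertex_of_ne {s t : V} (hst : s ≠ t) (hs : IsSupportVertex G s)
    (ht : IsSupportVertex G t) : IsS G := by
  refine ⟨?_, stallerWinsMBTD_false_of_isSupportVertex hs⟩
  obtain ⟨k, hk⟩ : ∃ k, Fintype.card V = k + 2 :=
    ⟨Fintype.card V - 2, by have := Fintype.one_lt_card_iff.mpr ⟨s, t, hst⟩; omega⟩
  unfold StallerWinsMBTD
  rw [hk]
  intro v _
  obtain ⟨w, hwv, hw⟩ : ∃ w, w ≠ v ∧ IsSupportVertex G w := by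
    by_cases hvs : v = s
    · exact ⟨t, hvs ▸ hst.symm, ht⟩
    · exact ⟨s, Ne.symm hvs, hs⟩
  refine ⟨w, by simp [hwv], winsAux_of_monotone monotone_exists_forall_adj_mem ?_
    (hw.exists_forall_adj_mem (mem_insert_self w ∅))⟩
  refine le_card_univ_sdiff ?_
  grw [card_union_le, card_insert_le, card_insert_le]
  simp [hk]

lemma dominatorWinsMBTD_true_starGraph (c : V) (hV : 2 < Fintype.card V) :
    DominatorWinsMBTD (starGraph c) true := by
  obtain ⟨k, hk⟩ : ∃ k, Fintype.card V = k + 3 := ⟨Fintype.card V - 3, by omega⟩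
  unfold DominatorWinsMBTD
  rw [hk]
  refine ⟨c, by simp, fun v _ => ?_⟩
  obtain ⟨u, hu⟩ : (univ \ (insert c ∅ ∪ insert v ∅) : Finset V).Nonempty :=
    card_pos.mp <| le_card_univ_sdiff <| by
      grw [card_union_le, card_insert_le, card_insert_le]
      simp [hk]
  have huc : u ≠ c := by simp_all
  refine ⟨u, hu, winsAux_of_monotone monotone_isTotalDomSet ?_
    (isTotalDomSet_starGraph huc (by simp) (by simp))⟩
  refine le_card_univ_sdiff ?_
  grw [card_union_le, card_insert_le, card_insert_le, card_insert_le]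
  simp [hk]

end Game

section Tree

variable {V : Type*} {T : SimpleGraph V}

lemma _root_.SimpleGraph.IsTree.length_eq_dist_of_isPath (hT : T.IsTree) {u v : V}
    {p : T.Walk u v} (hp : p.IsPath) : p.length = T.dist u v := by
  obtain ⟨q, hq, hlen⟩ := (hT.connected u v).exists_path_of_dist
  rw [← hlen, (hT.existsUnique_path u v).unique hp hq]

lemma _root_.SimpleGraph.IsTree.eq_penultimate_of_adj_of_forall_dist_le (hT : T.IsTree)
    {c x u : V} (hx : ∀ w, T.dist c w ≤ T.dist c x) {q : T.Walk c x} (hq : q.IsPath)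
    (hu : T.Adj x u) : u = q.penultimate := by
  have hlt : T.dist c u < T.dist c x := by
    have := hT.dist_eq_dist_add_one_of_adj c hu
    have := hx u
    omega
  refine hT.isAcyclic.eq_penultimate_of_adj_end hq hu (by_contra fun hu' => ?_)
  have := hT.length_eq_dist_of_isPath (hq.concat hu' hu)
  rw [Walk.length_concat, hT.length_eq_dist_of_isPath hq] at this
  omega

lemma _root_.SimpleGraph.IsTree.exists_isSupportVertex [Finite V] [Nontrivial V]
    (hT : T.IsTree) : ∃ s, IsSupportVertex T s := by
  classical
  have := Fintype.ofFinite V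
  obtain ⟨v, hv⟩ := hT.exists_vert_degree_one_of_nontrivial
  obtain ⟨s, -, hs⟩ := degree_eq_one_iff_existsUnique_adj.mp hv
  exact ⟨s, v, fun u hu => hs u hu.symm⟩

lemma _root_.SimpleGraph.IsTree.eq_starGraph_of_forall_isSupportVertex_eq [Finite V]
    [Nontrivial V] (hT : T.IsTree) {c : V} (h : ∀ s, IsSupportVertex T s → s = c) :
    T = starGraph c := by
  obtain ⟨x, hx⟩ := Finite.exists_max (T.dist c)
  have hpos : ∀ w, w ≠ c → 0 < T.dist c w := fun w hw => hT.connected.pos_dist_of_ne hw.symm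
  have hxc : x ≠ c := by
    obtain ⟨w, hw⟩ := exists_ne c
    rintro rfl
    have hle := hx w
    rw [dist_self] at hle
    exact (hpos w hw).ne' (Nat.eq_zero_of_le_zero hle)
  obtain ⟨q, hq, -⟩ := (hT.connected c x).exists_path_of_dist
  have hpen : q.penultimate = c :=
    h _ ⟨x, fun u hu => hT.eq_penultimate_of_adj_of_forall_dist_le hx hq hu.symm⟩
  have hcx : T.dist c x = 1 := by
    rw [dist_eq_one_iff_adj, ← hpen]
    exact q.adj_penultimate (Walk.not_nil_of_ne hxc.symm)
  have hdist : ∀ w, w ≠ c → T.dist c w = 1 := fun w hw => by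
    have := hx w
    have := hpos w hw
    omega
  ext u v
  rw [starGraph_adj]
  constructor
  · intro huv
    refine ⟨huv.ne, ?_⟩
    by_contra! hne
    exact hT.dist_ne_of_adj c huv (by rw [hdist u hne.1, hdist v hne.2])
  · rintro ⟨huv, rfl | rfl⟩
    · exact dist_eq_one_iff_adj.mp (hdist v huv.symm)
    · exact (dist_eq_one_iff_adj.mp (hdist u huv)).symm

lemma _root_.SimpleGraph.IsTree.exists_isSupportVertex_ne_or_eq_starGraph [Fintype V]
    [Nontrivial V] (hT : T.IsTree) :
    (∃ s t, s ≠ t ∧ IsSupportVertex T s ∧ IsSupportVertex T t) ∨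
      ∃ c, T = starGraph c ∧ 2 < Fintype.card V := by
  obtain ⟨c, hc⟩ := hT.exists_isSupportVertex
  by_cases h : ∃ t, t ≠ c ∧ IsSupportVertex T t
  · obtain ⟨t, htc, ht⟩ := h
    exact .inl ⟨t, c, htc, ht, hc⟩
  push Not at h
  have hstar : T = starGraph c :=
    hT.eq_starGraph_of_forall_isSupportVertex_eq fun s hs => by_contra fun hsc => h s hsc hs
  refine .inr ⟨c, hstar, Fintype.two_lt_card_iff.mpr ?_⟩
  obtain ⟨v, hv⟩ := exists_ne c
  -- if `c` had `v` as its only neighbour, `v` would be a second support vertex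
  by_contra! hcv
  exact h v hv ⟨c, fun u hu => (hcv c v u hv.symm hu.ne.symm).symm⟩

lemma _root_.SimpleGraph.IsTree.isS_of_not_exists_starGraph [Fintype V] [DecidableEq V]
    (hT : T.IsTree) (h : ¬ ∃ c, T = starGraph c ∧ 2 < Fintype.card V) : IsS T := by
  rcases subsingleton_or_nontrivial V with hV | hV
  · obtain ⟨v⟩ := hT.connected.nonempty
    exact isS_of_forall_not_adj (v := v) fun u hu => hu.ne (Subsingleton.elim u v)
  · rcases hT.exists_isSupportVertex_ne_or_eq_starGraph with ⟨s, t, hst, hs, ht⟩ | hstar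
    · exact isS_of_isSupportVertex_of_ne hst hs ht
    · exact absurd hstar h

end Tree

section Star

variable {V : Type*}

lemma isN_starGraph [Fintype V] [DecidableEq V] (c : V) (hV : 2 < Fintype.card V) :
    IsN (starGraph c) := by
  have : Nontrivial V := Fintype.one_lt_card_iff_nontrivial.mp (by omega)
  obtain ⟨v, hv⟩ := exists_ne c
  have hc : IsSupportVertex (starGraph c) c :=
    ⟨v, fun u hu => (starGraph_adj.mp hu).2.resolve_right hv⟩
  exact ⟨dominatorWinsMBTD_true_starGraph c hV, stallerWinsMBTD_false_of_isSupportVertex hc⟩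

lemma eq_starGraph_of_iso {α β : Type*} [Unique α] {G : SimpleGraph V}
    (e : G ≃g completeBipartiteGraph α β) : G = starGraph (e.symm (Sum.inl default)) := by
  ext u v
  rw [← e.map_adj_iff, starGraph_adj, ← e.injective.ne_iff, eq_comm (a := u), eq_comm (a := v),
    e.symm_apply_eq, e.symm_apply_eq]
  cases e u <;> cases e v <;> simp [Unique.eq_default]

def starGraphIsoCompleteBipartiteGraph [DecidableEq V] (c : V) :
    starGraph c ≃g completeBipartiteGraph {v // v = c} {v // v ≠ c} where
  toEquiv := (Equiv.sumCompl (· = c)).symm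
  map_rel_iff' {u v} := by
    by_cases hu : u = c <;> by_cases hv : v = c <;>
      simp [hu, hv, Equiv.sumCompl_symm_apply_of_pos, Equiv.sumCompl_symm_apply_of_neg,
        ne_comm (a := c)]

lemma exists_iso_completeBipartiteGraph_iff [Fintype V] [DecidableEq V] {G : SimpleGraph V} :
    (∃ n, 2 ≤ n ∧ Nonempty (G ≃g completeBipartiteGraph (Fin 1) (Fin n))) ↔
      ∃ c, G = starGraph c ∧ 2 < Fintype.card V := by
  constructor
  · rintro ⟨n, hn, ⟨e⟩⟩
    have hcard := Fintype.card_congr e.toEquiv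
    simp only [Fintype.card_sum, Fintype.card_fin] at hcard
    exact ⟨_, eq_starGraph_of_iso e, by omega⟩
  · rintro ⟨c, rfl, hV⟩
    have hcard : Fintype.card {v // v ≠ c} = Fintype.card V - 1 := by
      rw [Fintype.card_subtype_compl, Fintype.card_subtype_eq]
    exact ⟨Fintype.card V - 1, by omega, ⟨(starGraphIsoCompleteBipartiteGraph c).trans
      (completeBipartiteGraphCongr (Equiv.ofUnique _ _) (Fintype.equivFinOfCardEq hcard))⟩⟩

end Star

/-- a finite (nonempty) tree is an `𝒩` graph iff it is a star `K_{1,n}` with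
`n ≥ 2`; otherwise it is an `𝒮` graph. -/
theorem stmt19 {V : Type*} [Fintype V] [DecidableEq V] (T : SimpleGraph V)
    (hT : T.IsTree) :
    (IsN T ↔ ∃ n : ℕ, 2 ≤ n ∧ Nonempty (T ≃g completeBipartiteGraph (Fin 1) (Fin n))) ∧
    ((¬ ∃ n : ℕ, 2 ≤ n ∧ Nonempty (T ≃g completeBipartiteGraph (Fin 1) (Fin n))) → IsS T) := by
  rw [exists_iso_completeBipartiteGraph_iff]
  have hS := hT.isS_of_not_exists_starGraph
  refine ⟨⟨fun hN => ?_, ?_⟩, hS⟩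
  · by_contra hstar
    exact not_dominatorWinsMBTD_and_stallerWinsMBTD true ⟨hN.1, (hS hstar).1⟩
  · rintro ⟨c, rfl, hV⟩
    exact isN_starGraph c hV

end MBTD
end
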